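/- Let DMU_o = (x_o,y_o), o ∈ J, be FDH_V-efficient. Then Left-CRS prevails at DMU_o if and only if both of the following hold: (a) there exists j ∈ J with α_{jo} < 1 and β_{jo} ≥ α_{jo}; and (b) for every j ∈ J, α_{jo} ≥ 1 or α_{jo} ≥ β_{jo}. -/

import Mathlib

open Set

noncomputable section

/-- The FDH variable-returns-to-scale technology:
`T = {(x,y) : y ≥ 0 and ∃ j, x_j ≤ x and y ≤ y_j}`. -/
def FDH {n m s : ℕ} (x : Fin n → Fin m → ℝ) (y : Fin n → Fin s → ℝ) :
    Set ((Fin m → ℝ) × (Fin s → ℝ)) :=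
  {p | (∀ r, 0 ≤ p.2 r) ∧ ∃ j : Fin n, (∀ i, x j i ≤ p.1 i) ∧ (∀ r, p.2 r ≤ y j r)}

/-- DMU_o is FDH_V-efficient: no (x,y) ∈ T with x ≤ x_o, y ≥ y_o, (x,y) ≠ (x_o,y_o). -/
def FDHEfficient {n m s : ℕ} (x : Fin n → Fin m → ℝ) (y : Fin n → Fin s → ℝ)
    (o : Fin n) : Prop :=
  ¬ ∃ p ∈ FDH x y, (∀ i, p.1 i ≤ x o i) ∧ (∀ r, y o r ≤ p.2 r) ∧ p ≠ (x o, y o)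

/-- `α_{jo} = max_i x_{ij} / x_{io}`. -/
def alphaRatio {n m s : ℕ} (x : Fin n → Fin m → ℝ) (_y : Fin n → Fin s → ℝ)
    (o j : Fin n) : ℝ :=
  ⨆ i : Fin m, x j i / x o i

/-- `β_{jo} = min_r y_{rj} / y_{ro}`. -/
def betaRatio {n m s : ℕ} (_x : Fin n → Fin m → ℝ) (y : Fin n → Fin s → ℝ)
    (o j : Fin n) : ℝ :=
  ⨅ r : Fin s, y j r / y o r

/-- `θ_o(D) = inf {θ : ∃ j ∈ J, δ ∈ D, δ x_j ≤ θ x_o, δ y_j ≥ y_o}`. -/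
def thetaEff {n m s : ℕ} (x : Fin n → Fin m → ℝ) (y : Fin n → Fin s → ℝ)
    (o : Fin n) (D : Set ℝ) : ℝ :=
  sInf {θ : ℝ | ∃ j : Fin n, ∃ δ ∈ D,
    (∀ i, δ * x j i ≤ θ * x o i) ∧ (∀ r, y o r ≤ δ * y j r)}

/-- G-IRS prevails at DMU_o iff `θ_o^{ND} > θ_o^{C} = θ_o^{NI}`. -/
def GIRS {n m s : ℕ} (x : Fin n → Fin m → ℝ) (y : Fin n → Fin s → ℝ)
    (o : Fin n) : Prop :=
  thetaEff x y o (Ici 1) > thetaEff x y o (Ici 0) ∧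
    thetaEff x y o (Ici 0) = thetaEff x y o (Icc 0 1)

/-- G-DRS prevails at DMU_o iff `θ_o^{NI} > θ_o^{C} = θ_o^{ND}`. -/
def GDRS {n m s : ℕ} (x : Fin n → Fin m → ℝ) (y : Fin n → Fin s → ℝ)
    (o : Fin n) : Prop :=
  thetaEff x y o (Icc 0 1) > thetaEff x y o (Ici 0) ∧
    thetaEff x y o (Ici 0) = thetaEff x y o (Ici 1)

/-- G-CRS prevails at DMU_o iff `θ_o^{C} = θ_o^{NI} = θ_o^{ND} = 1`. -/
def GCRS {n m s : ℕ} (x : Fin n → Fin m → ℝ) (y : Fin n → Fin s → ℝ)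
    (o : Fin n) : Prop :=
  thetaEff x y o (Ici 0) = 1 ∧ thetaEff x y o (Icc 0 1) = 1 ∧
    thetaEff x y o (Ici 1) = 1

/-- G-SCRS prevails at DMU_o iff `θ_o^{C} = θ_o^{NI} = θ_o^{ND} < 1`. -/
def GSCRS {n m s : ℕ} (x : Fin n → Fin m → ℝ) (y : Fin n → Fin s → ℝ)
    (o : Fin n) : Prop :=
  thetaEff x y o (Ici 0) = thetaEff x y o (Icc 0 1) ∧
    thetaEff x y o (Icc 0 1) = thetaEff x y o (Ici 1) ∧
    thetaEff x y o (Ici 1) < 1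

/-- Response function `β_o(α) = sup {β : (α x_o, β y_o) ∈ T}`. -/
def respFun {n m s : ℕ} (x : Fin n → Fin m → ℝ) (y : Fin n → Fin s → ℝ)
    (o : Fin n) (α : ℝ) : ℝ :=
  sSup {β : ℝ | ((fun i => α * x o i), (fun r => β * y o r)) ∈ FDH x y}

/-- Maximum incremental ratio `σ_o^+ = sup_{α > 1} (β_o(α) - 1)/(α - 1)`. -/
def sigmaPlus {n m s : ℕ} (x : Fin n → Fin m → ℝ) (y : Fin n → Fin s → ℝ)
    (o : Fin n) : ℝ :=
  sSup {ρ : ℝ | ∃ α : ℝ, 1 < α ∧ ρ = (respFun x y o α - 1) / (α - 1)}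

/-- Minimum decremental ratio `σ_o^- = inf {(β_o(α)-1)/(α-1) : α < 1 feasible}`,
taken in the extended reals (so it is `+∞` when no `α < 1` is feasible). -/
def sigmaMinus {n m s : ℕ} (x : Fin n → Fin m → ℝ) (y : Fin n → Fin s → ℝ)
    (o : Fin n) : EReal :=
  sInf {ρ : EReal | ∃ α : ℝ, α < 1 ∧
    (∃ β : ℝ, ((fun i => α * x o i), (fun r => β * y o r)) ∈ FDH x y) ∧
    ρ = (((respFun x y o α - 1) / (α - 1) : ℝ) : EReal)}

/-- Right-IRS: `(δ x_o, δ y_o) ∈ int T` for some `δ > 1`. -/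
def RightIRS {n m s : ℕ} (x : Fin n → Fin m → ℝ) (y : Fin n → Fin s → ℝ)
    (o : Fin n) : Prop :=
  ∃ δ : ℝ, 1 < δ ∧
    ((fun i => δ * x o i), (fun r => δ * y o r)) ∈ interior (FDH x y)

/-- Right-DRS: `(δ x_o, δ y_o) ∉ T` for every `δ > 1`. -/
def RightDRS {n m s : ℕ} (x : Fin n → Fin m → ℝ) (y : Fin n → Fin s → ℝ)
    (o : Fin n) : Prop :=
  ∀ δ : ℝ, 1 < δ →
    ((fun i => δ * x o i), (fun r => δ * y o r)) ∉ FDH x y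

/-- Right-CRS: neither Right-IRS nor Right-DRS. -/
def RightCRS {n m s : ℕ} (x : Fin n → Fin m → ℝ) (y : Fin n → Fin s → ℝ)
    (o : Fin n) : Prop :=
  ¬ RightIRS x y o ∧ ¬ RightDRS x y o

/-- Left-IRS: `(δ x_o, δ y_o) ∉ T` for every `δ ∈ (0,1)`. -/
def LeftIRS {n m s : ℕ} (x : Fin n → Fin m → ℝ) (y : Fin n → Fin s → ℝ)
    (o : Fin n) : Prop :=
  ∀ δ : ℝ, 0 < δ → δ < 1 →
    ((fun i => δ * x o i), (fun r => δ * y o r)) ∉ FDH x y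

/-- Left-DRS: `(δ x_o, δ y_o) ∈ int T` for some `δ ∈ (0,1)`. -/
def LeftDRS {n m s : ℕ} (x : Fin n → Fin m → ℝ) (y : Fin n → Fin s → ℝ)
    (o : Fin n) : Prop :=
  ∃ δ : ℝ, 0 < δ ∧ δ < 1 ∧
    ((fun i => δ * x o i), (fun r => δ * y o r)) ∈ interior (FDH x y)

/-- Left-CRS: neither Left-IRS nor Left-DRS. -/
def LeftCRS {n m s : ℕ} (x : Fin n → Fin m → ℝ) (y : Fin n → Fin s → ℝ)
    (o : Fin n) : Prop :=
  ¬ LeftIRS x y o ∧ ¬ LeftDRS x y o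

/-! Along the ray through DMU_o, for `δ > 0` the point `(δ x_o, δ y_o)` lies in `T` iff
`α_{jo} ≤ δ ≤ β_{jo}` for some `j`, and in the interior of `T` iff `α_{jo} < δ < β_{jo}` for
some `j`. So Left-IRS fails iff some interval `[α_{jo}, β_{jo}]` meets `(0, 1)`, which is (a)
because `α_{jo} > 0`; and Left-DRS holds iff some interval `(α_{jo}, β_{jo})` meets `(0, 1)`,
which is the negation of (b). -/

open Filter Topology

lemma eventually_add_smul_mem_of_mem_interior {E : Type*} [AddCommGroup E] [Module ℝ E]
    [TopologicalSpace E] [ContinuousAdd E] [ContinuousSMul ℝ E] {S : Set E} {p : E}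
    (hp : p ∈ interior S) (d : E) : ∀ᶠ t in 𝓝 (0 : ℝ), p + t • d ∈ S := by
  have hcont : Tendsto (fun t : ℝ => p + t • d) (𝓝 0) (𝓝 p) := by
    simpa using (show Continuous fun t : ℝ => p + t • d by fun_prop).tendsto 0
  exact hcont.eventually (mem_interior_iff_mem_nhds.1 hp)

section FDH

variable {n m s : ℕ} (x : Fin n → Fin m → ℝ) (y : Fin n → Fin s → ℝ)

lemma mem_interior_FDH_iff {p : (Fin m → ℝ) × (Fin s → ℝ)} :
    p ∈ interior (FDH x y) ↔
      (∀ r, 0 < p.2 r) ∧ ∃ j, (∀ i, x j i < p.1 i) ∧ ∀ r, p.2 r < y j r := by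
  constructor
  · intro hp
    have hdir (d) : ∀ᶠ t in 𝓝[>] (0 : ℝ), p + t • d ∈ FDH x y :=
      nhdsWithin_le_nhds (eventually_add_smul_mem_of_mem_interior hp d)
    -- Direction `(-1, 1)` yields the strict bounds against some `j`; `(0, -1)` yields `0 < p.2`.
    obtain ⟨t, ht : 0 < t, ⟨-, j, hxj, hyj⟩, hpos, -⟩ :=
      (eventually_mem_nhdsWithin.and ((hdir (-1, 1)).and (hdir (0, -1)))).exists
    simp only [Prod.fst_add, Prod.snd_add, Prod.smul_mk, Pi.add_apply, Pi.smul_apply,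
      Pi.neg_apply, Pi.one_apply, smul_eq_mul] at hxj hyj hpos
    exact ⟨fun r => by linarith [hpos r], j, fun i => by linarith [hxj i],
      fun r => by linarith [hyj r]⟩
  · rintro ⟨hpos, j, hxj, hyj⟩
    refine mem_interior.2 ⟨{q | (∀ r, 0 < q.2 r) ∧ (∀ i, x j i < q.1 i) ∧ ∀ r, q.2 r < y j r},
      fun q ⟨hq, hxq, hyq⟩ => ⟨fun r => (hq r).le, j, fun i => (hxq i).le, fun r => (hyq r).le⟩,
      ?_, hpos, hxj, hyj⟩
    simp only [ofPred_and, ofPred_forall]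
    exact .inter (isOpen_iInter_of_finite fun r => isOpen_lt (by fun_prop) (by fun_prop))
      (.inter (isOpen_iInter_of_finite fun i => isOpen_lt (by fun_prop) (by fun_prop))
        (isOpen_iInter_of_finite fun r => isOpen_lt (by fun_prop) (by fun_prop)))

variable (o j : Fin n)

lemma div_le_alphaRatio (i : Fin m) : x j i / x o i ≤ alphaRatio x y o j :=
  le_ciSup (f := fun i => x j i / x o i) (Set.finite_range _).bddAbove i

lemma betaRatio_le_div (r : Fin s) : betaRatio x y o j ≤ y j r / y o r :=
  ciInf_le (f := fun r => y j r / y o r) (Set.finite_range _).bddBelow r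

lemma alphaRatio_pos (hm : 0 < m) (hx : ∀ j i, 0 < x j i) : 0 < alphaRatio x y o j :=
  (div_pos (hx j ⟨0, hm⟩) (hx o ⟨0, hm⟩)).trans_le (div_le_alphaRatio x y o j _)

variable {x y}

lemma alphaRatio_le_iff (hm : 0 < m) (hxo : ∀ i, 0 < x o i) {δ : ℝ} :
    alphaRatio x y o j ≤ δ ↔ ∀ i, x j i ≤ δ * x o i := by
  have : Nonempty (Fin m) := Fin.pos_iff_nonempty.1 hm
  rw [alphaRatio, ciSup_le_iff (Set.finite_range _).bddAbove]
  exact forall_congr' fun i => div_le_iff₀ (hxo i)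

lemma le_betaRatio_iff (hs : 0 < s) (hyo : ∀ r, 0 < y o r) {δ : ℝ} :
    δ ≤ betaRatio x y o j ↔ ∀ r, δ * y o r ≤ y j r := by
  have : Nonempty (Fin s) := Fin.pos_iff_nonempty.1 hs
  rw [betaRatio, le_ciInf_iff (Set.finite_range _).bddBelow]
  exact forall_congr' fun r => le_div_iff₀ (hyo r)

lemma alphaRatio_lt_iff (hm : 0 < m) (hxo : ∀ i, 0 < x o i) {δ : ℝ} :
    alphaRatio x y o j < δ ↔ ∀ i, x j i < δ * x o i := by
  have : Nonempty (Fin m) := Fin.pos_iff_nonempty.1 hm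
  obtain ⟨i₀, hi₀⟩ := exists_eq_ciSup_of_finite (f := fun i => x j i / x o i)
  refine ⟨fun h i => (div_lt_iff₀ (hxo i)).1 ((div_le_alphaRatio x y o j i).trans_lt h),
    fun h => ?_⟩
  rw [alphaRatio, ← hi₀]
  exact (div_lt_iff₀ (hxo i₀)).2 (h i₀)

lemma lt_betaRatio_iff (hs : 0 < s) (hyo : ∀ r, 0 < y o r) {δ : ℝ} :
    δ < betaRatio x y o j ↔ ∀ r, δ * y o r < y j r := by
  have : Nonempty (Fin s) := Fin.pos_iff_nonempty.1 hs
  obtain ⟨r₀, hr₀⟩ := exists_eq_ciInf_of_finite (f := fun r => y j r / y o r)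
  refine ⟨fun h r => (lt_div_iff₀ (hyo r)).1 (h.trans_le (betaRatio_le_div x y o j r)),
    fun h => ?_⟩
  rw [betaRatio, ← hr₀]
  exact (lt_div_iff₀ (hyo r₀)).2 (h r₀)

variable {o}

lemma ray_mem_FDH_iff (hm : 0 < m) (hs : 0 < s) (hxo : ∀ i, 0 < x o i) (hyo : ∀ r, 0 < y o r)
    {δ : ℝ} (hδ : 0 ≤ δ) :
    ((fun i => δ * x o i), (fun r => δ * y o r)) ∈ FDH x y ↔
      ∃ j, alphaRatio x y o j ≤ δ ∧ δ ≤ betaRatio x y o j := by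
  simp only [FDH, mem_ofPred_eq, alphaRatio_le_iff _ _ hm hxo, le_betaRatio_iff _ _ hs hyo]
  exact and_iff_right fun r => mul_nonneg hδ (hyo r).le

lemma ray_mem_interior_FDH_iff (hm : 0 < m) (hs : 0 < s) (hxo : ∀ i, 0 < x o i)
    (hyo : ∀ r, 0 < y o r) {δ : ℝ} (hδ : 0 < δ) :
    ((fun i => δ * x o i), (fun r => δ * y o r)) ∈ interior (FDH x y) ↔
      ∃ j, alphaRatio x y o j < δ ∧ δ < betaRatio x y o j := by
  simp only [mem_interior_FDH_iff, alphaRatio_lt_iff _ _ hm hxo, lt_betaRatio_iff _ _ hs hyo]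
  exact and_iff_right fun r => mul_pos hδ (hyo r)

lemma not_leftIRS_iff (hm : 0 < m) (hs : 0 < s) (hx : ∀ j i, 0 < x j i)
    (hyo : ∀ r, 0 < y o r) :
    ¬ LeftIRS x y o ↔ ∃ j, alphaRatio x y o j < 1 ∧ alphaRatio x y o j ≤ betaRatio x y o j := by
  simp only [LeftIRS, not_forall, not_not, exists_prop]
  constructor
  · rintro ⟨δ, hδ, hδ1, hmem⟩
    obtain ⟨j, hαδ, hδβ⟩ := (ray_mem_FDH_iff hm hs (hx o) hyo hδ.le).1 hmem
    exact ⟨j, hαδ.trans_lt hδ1, hαδ.trans hδβ⟩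
  · rintro ⟨j, hα1, hαβ⟩
    have hα := alphaRatio_pos x y o j hm hx
    exact ⟨_, hα, hα1, (ray_mem_FDH_iff hm hs (hx o) hyo hα.le).2 ⟨j, le_rfl, hαβ⟩⟩

lemma leftDRS_iff (hm : 0 < m) (hs : 0 < s) (hx : ∀ j i, 0 < x j i) (hyo : ∀ r, 0 < y o r) :
    LeftDRS x y o ↔ ∃ j, alphaRatio x y o j < 1 ∧ alphaRatio x y o j < betaRatio x y o j := by
  constructor
  · rintro ⟨δ, hδ, hδ1, hint⟩
    obtain ⟨j, hαδ, hδβ⟩ := (ray_mem_interior_FDH_iff hm hs (hx o) hyo hδ).1 hint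
    exact ⟨j, hαδ.trans hδ1, hαδ.trans hδβ⟩
  · rintro ⟨j, hα1, hαβ⟩
    obtain ⟨δ, hαδ, hδ⟩ := exists_between (lt_min hα1 hαβ)
    have hδ0 := (alphaRatio_pos x y o j hm hx).trans hαδ
    exact ⟨δ, hδ0, hδ.trans_le (min_le_left _ _),
      (ray_mem_interior_FDH_iff hm hs (hx o) hyo hδ0).2 ⟨j, hαδ, hδ.trans_le (min_le_right _ _)⟩⟩

end FDH

theorem stmt9_general {n m s : ℕ} (hm : 0 < m) (hs : 0 < s)
    (x : Fin n → Fin m → ℝ) (y : Fin n → Fin s → ℝ)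
    (hx : ∀ j i, 0 < x j i) (hy : ∀ j r, 0 < y j r)
    (o : Fin n) :
    LeftCRS x y o ↔
      (∃ j : Fin n, alphaRatio x y o j < 1 ∧ alphaRatio x y o j ≤ betaRatio x y o j) ∧
      (∀ j : Fin n, 1 ≤ alphaRatio x y o j ∨ betaRatio x y o j ≤ alphaRatio x y o j) := by
  rw [LeftCRS, not_leftIRS_iff hm hs hx (hy o), leftDRS_iff hm hs hx (hy o)]
  simp only [not_exists, not_and_or, not_lt]

/-- Left-CRS prevails at the FDH_V-efficient DMU_o iff
(a) there exists `j` with `α_{jo} < 1` and `β_{jo} ≥ α_{jo}`, and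
(b) for every `j`, `α_{jo} ≥ 1` or `α_{jo} ≥ β_{jo}`. -/
theorem stmt9 {n m s : ℕ} (hm : 0 < m) (hs : 0 < s)
    (x : Fin n → Fin m → ℝ) (y : Fin n → Fin s → ℝ)
    (hx : ∀ j i, 0 < x j i) (hy : ∀ j r, 0 < y j r)
    (o : Fin n) (heff : FDHEfficient x y o) :
    LeftCRS x y o ↔
      (∃ j : Fin n, alphaRatio x y o j < 1 ∧ alphaRatio x y o j ≤ betaRatio x y o j) ∧
      (∀ j : Fin n, 1 ≤ alphaRatio x y o j ∨ betaRatio x y o j ≤ alphaRatio x y o j) :=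
  stmt9_general hm hs x y hx hy o
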